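/- Let d be a permutation martingale. Then there exists π ∈ Π such that for every i ≥ 0, d(π↾(i+1)) ≤ min_{x ∈ free(π↾i)} d((π↾i), x) + 2^{−2|s_i|}; and for any such π, for every N ≥ 0, d(π↾N) ≤ d([]) + Σ_{i<N} 2^{−2|s_i|} ≤ d([]) + 2, so in particular d does not succeed on π. Consequently, no permutation martingale succeeds on every permutation in Π. -/

import Mathlib

open Filter MeasureTheory

/-- Binary strings. -/
abbrev Str := List Bool

/-- The standard length-lexicographic enumeration `s_0 = λ, s_1 = 0, s_2 = 1, s_3 = 00, …`
of binary strings: `stdEnum n` is the binary representation of `n+1` with the leading 1 removed. -/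
def stdEnum (n : ℕ) : Str := ((n + 1).bits.dropLast).reverse

/-- The set Π of length-preserving permutations of `{0,1}*`. -/
structure LPPerm where
  toFun : Str → Str
  bij : Function.Bijective toFun
  lenPres : ∀ x, (toFun x).length = x.length

/-- `g` is a prefix partial permutation: a finite list of pairwise distinct binary strings
with `|g(s_i)| = |s_i|` for all `i < |g|`. -/
def IsPPP (g : List Str) : Prop :=
  g.Nodup ∧ ∀ i (h : i < g.length), (g.get ⟨i, h⟩).length = (stdEnum i).length

/-- The finite set of binary strings of length `n`. -/
def strsOfLen (n : ℕ) : Finset Str :=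
  (Finset.univ : Finset (Fin n → Bool)).image List.ofFn

/-- `free(g)`: strings of length `|s_{|g|}|` that do not occur as entries of `g`. -/
def freeSet (g : List Str) : Finset Str :=
  (strsOfLen (stdEnum g.length).length).filter (fun x => x ∉ g)

/-- A permutation martingale: nonnegative and satisfying the averaging condition
`d(g) = (1/|free(g)|) · Σ_{x ∈ free(g)} d((g,x))` on prefix partial permutations. -/
def IsPermMartingale (d : List Str → ℝ) : Prop :=
  (∀ g, 0 ≤ d g) ∧
    ∀ g, IsPPP g → d g = (1 / ((freeSet g).card : ℝ)) * ∑ x ∈ freeSet g, d (g ++ [x])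

/-- The cylinder measure `μ(g) = (∏_{k<n} 1/(2^k)!) · (2^n − m)!/(2^n)!` where
`2^n − 1 ≤ |g| < 2^{n+1} − 1` (so `n = log2(|g|+1)`) and `m = |g| − (2^n − 1)`. -/
noncomputable def muPPP (g : List Str) : ℝ :=
  (∏ k ∈ Finset.range (Nat.log2 (g.length + 1)), (1 : ℝ) / (Nat.factorial (2 ^ k))) *
      (Nat.factorial
        (2 ^ Nat.log2 (g.length + 1) - (g.length - (2 ^ Nat.log2 (g.length + 1) - 1)))) /
      (Nat.factorial (2 ^ Nat.log2 (g.length + 1)))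

/-- The cylinder of all permutations extending the prefix partial permutation `g`. -/
def cyl (g : List Str) : Set LPPerm :=
  {π | ∀ i (h : i < g.length), π.toFun (stdEnum i) = g.get ⟨i, h⟩}

/-- The σ-algebra `F_Π` generated by the cylinders. -/
instance : MeasurableSpace LPPerm :=
  MeasurableSpace.generateFrom {S | ∃ g, IsPPP g ∧ S = cyl g}

/-- `π↾N = [π(s_0), …, π(s_{N−1})]`. -/
def LPPerm.restrict (π : LPPerm) (N : ℕ) : List Str :=
  (List.range N).map (fun i => π.toFun (stdEnum i))

/-- `d` succeeds on `π`: `limsup_{N→∞} d(π↾N) = ∞`. -/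
def succeedsOn (d : List Str → ℝ) (π : LPPerm) : Prop :=
  ∀ C : ℝ, ∃ᶠ N in atTop, C < d (π.restrict N)

-- AUX START
lemma stdEnum_zero : stdEnum 0 = [] := by
  simp [stdEnum, Nat.one_bits]

lemma bits_ne_nil (m : ℕ) : (m+1).bits ≠ [] := by
  intro h; have := congrArg List.length h
  rw [Nat.size_eq_bits_len] at this
  simp [Nat.size_eq_zero] at this

lemma stdEnum_odd (m : ℕ) : stdEnum (2*m+1) = stdEnum m ++ [false] := by
  unfold stdEnum
  have h2 : (2*m+1+1) = 2*(m+1) := by ring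
  rw [h2, Nat.bit0_bits _ (Nat.succ_ne_zero m),
    List.dropLast_cons_of_ne_nil (bits_ne_nil m), List.reverse_cons]

lemma stdEnum_even (m : ℕ) : stdEnum (2*m+2) = stdEnum m ++ [true] := by
  unfold stdEnum
  have h2 : (2*m+2+1) = 2*(m+1)+1 := by ring
  rw [h2, Nat.bit1_bits,
    List.dropLast_cons_of_ne_nil (bits_ne_nil m), List.reverse_cons]

lemma stdEnum_length (n : ℕ) : (stdEnum n).length = Nat.log2 (n+1) := by
  unfold stdEnum
  rw [List.length_reverse, List.length_dropLast, Nat.size_eq_bits_len]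
  have h1 : Nat.size (n+1) ≤ Nat.log2 (n+1) + 1 :=
    Nat.size_le.2 Nat.lt_log2_self
  have h2 : Nat.log2 (n+1) < Nat.size (n+1) :=
    Nat.lt_size.2 (Nat.log2_self_le (Nat.succ_ne_zero n))
  omega

def dec1 (s : Str) : ℕ := s.foldl (fun n b => 2*n + cond b 1 0) 1

lemma dec1_stdEnum : ∀ n, dec1 (stdEnum n) = n + 1 := by
  intro n
  induction n using Nat.strong_induction_on with
  | _ n ih =>
    match n with
    | 0 => rw [stdEnum_zero]; rfl
    | n+1 =>
      rcases Nat.even_or_odd n with ⟨m, hm⟩ | ⟨m, hm⟩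
      · have h2 : n + 1 = 2*m + 1 := by omega
        rw [h2, stdEnum_odd]
        have := ih m (by omega)
        simp [dec1, List.foldl_append] at this ⊢
        omega
      · have h2 : n + 1 = 2*m + 2 := by omega
        rw [h2, stdEnum_even]
        have := ih m (by omega)
        simp [dec1, List.foldl_append] at this ⊢
        omega

lemma stdEnum_injective : Function.Injective stdEnum := by
  intro a b h
  have := dec1_stdEnum a
  rw [h, dec1_stdEnum] at this
  omega

lemma stdEnum_surjective : Function.Surjective stdEnum := by
  intro s
  induction s using List.reverseRecOn with
  | nil => exact ⟨0, stdEnum_zero⟩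
  | append_singleton l b ih =>
    obtain ⟨m, hm⟩ := ih
    cases b
    · exact ⟨2*m+1, by rw [stdEnum_odd, hm]⟩
    · exact ⟨2*m+2, by rw [stdEnum_even, hm]⟩

lemma mem_strsOfLen {x : Str} {n : ℕ} : x ∈ strsOfLen n ↔ x.length = n := by
  constructor
  · rintro h
    simp only [strsOfLen, Finset.mem_image] at h
    obtain ⟨f, _, rfl⟩ := h
    simp
  · intro h
    simp only [strsOfLen, Finset.mem_image]
    refine ⟨fun i => x.get (Fin.cast h.symm i), Finset.mem_univ _, ?_⟩
    apply List.ext_get (by simp [h])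
    intro i h1 h2
    simp [List.get_ofFn]

lemma card_strsOfLen (n : ℕ) : (strsOfLen n).card = 2^n := by
  rw [strsOfLen, Finset.card_image_of_injective _ ?_, Finset.card_univ]
  · rw [Fintype.card_fun]; simp
  · exact fun a b h => funext fun i => by
      simpa using congrArg (fun l => l.getD i false) h

lemma mem_freeSet {x : Str} {g : List Str} :
    x ∈ freeSet g ↔ x.length = (stdEnum g.length).length ∧ x ∉ g := by
  simp only [freeSet, Finset.mem_filter, mem_strsOfLen]

lemma freeSet_nonempty {g : List Str} (hg : IsPPP g) : (freeSet g).Nonempty := by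
  by_contra hne
  set n := (stdEnum g.length).length with hn
  have h : ∀ x ∈ strsOfLen n, x ∈ g := by
    intro x hx
    by_contra hxg
    exact hne ⟨x, Finset.mem_filter.2 ⟨hx, hxg⟩⟩
  have hlog : n = Nat.log2 (g.length + 1) := by rw [hn, stdEnum_length]
  have hub : g.length + 1 < 2^(n+1) := by
    rw [hlog]; exact Nat.lt_log2_self
  have hlb : 2^n ≤ g.length + 1 := by
    rw [hlog]; exact Nat.log2_self_le (Nat.succ_ne_zero _)
  have hsurj : Set.SurjOn (fun i => g.getD i [])
      (Finset.Ico (2^n - 1) g.length) (strsOfLen n) := by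
    intro x hx
    obtain ⟨i, hget⟩ := List.mem_iff_get.1 (h x hx)
    have hlen := hg.2 i i.isLt
    rw [hget] at hlen
    have hxn : x.length = n := mem_strsOfLen.1 hx
    have hlog2 : Nat.log2 ((i : ℕ) + 1) = n := by
      rw [← stdEnum_length, ← hlen, hxn]
    have h2 : 2^n ≤ (i : ℕ) + 1 := hlog2 ▸ Nat.log2_self_le (Nat.succ_ne_zero _)
    refine ⟨i, ?_, ?_⟩
    · simp only [Finset.coe_Ico, Set.mem_Ico]
      exact ⟨by omega, i.isLt⟩
    · simp only [List.getD_eq_getElem?_getD, List.getElem?_eq_getElem i.isLt]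
      simpa using hget
  have hcard := Finset.card_le_card_of_surjOn _ hsurj
  rw [card_strsOfLen, Nat.card_Ico] at hcard
  omega

lemma isPPP_nil : IsPPP [] := ⟨List.nodup_nil, fun i h => by simp at h⟩

lemma isPPP_append {g : List Str} {x : Str} (hg : IsPPP g) (hx : x ∈ freeSet g) :
    IsPPP (g ++ [x]) := by
  obtain ⟨hlen, hnmem⟩ := mem_freeSet.1 hx
  constructor
  · rw [List.nodup_append]
    exact ⟨hg.1, List.nodup_singleton x, by simpa using fun a (ha : a ∈ g) (h : a = x) => hnmem (h ▸ ha)⟩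
  · intro i h
    rw [List.length_append, List.length_singleton] at h
    rcases lt_or_eq_of_le (Nat.lt_succ_iff.1 h) with h' | h'
    · simp only [List.get_eq_getElem, List.getElem_append_left h']
      exact hg.2 i h'
    · subst h'
      simp only [List.get_eq_getElem, List.getElem_append_right (le_refl g.length)]
      simpa using hlen

noncomputable def nextStr (d : List Str → ℝ) (g : List Str) : Str :=
  if h : (freeSet g).Nonempty then
    Classical.choose (Finset.exists_min_image (freeSet g) (fun x => d (g ++ [x])) h)
  else []

lemma nextStr_mem {d : List Str → ℝ} {g : List Str} (h : (freeSet g).Nonempty) :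
    nextStr d g ∈ freeSet g := by
  rw [nextStr, dif_pos h]
  exact (Classical.choose_spec (Finset.exists_min_image (freeSet g) (fun x => d (g ++ [x])) h)).1

lemma nextStr_min {d : List Str → ℝ} {g : List Str} (h : (freeSet g).Nonempty)
    {x : Str} (hx : x ∈ freeSet g) : d (g ++ [nextStr d g]) ≤ d (g ++ [x]) := by
  rw [nextStr, dif_pos h]
  exact (Classical.choose_spec (Finset.exists_min_image (freeSet g) (fun x => d (g ++ [x])) h)).2 x hx

noncomputable def greedy (d : List Str → ℝ) : ℕ → List Str
  | 0 => []
  | n+1 => greedy d n ++ [nextStr d (greedy d n)]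

lemma greedy_isPPP (d : List Str → ℝ) (n : ℕ) : IsPPP (greedy d n) := by
  induction n with
  | zero => exact isPPP_nil
  | succ n ih => exact isPPP_append ih (nextStr_mem (freeSet_nonempty ih))

lemma greedy_length (d : List Str → ℝ) (n : ℕ) : (greedy d n).length = n := by
  induction n with
  | zero => rfl
  | succ n ih => simp [greedy, ih]

lemma greedy_get (d : List Str → ℝ) (n i : ℕ) (h : i < n) :
    (greedy d n).get ⟨i, by rw [greedy_length]; exact h⟩ = nextStr d (greedy d i) := by
  induction n with
  | zero => omega
  | succ n ih =>
    rcases lt_or_eq_of_le (Nat.lt_succ_iff.1 h) with h' | h'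
    · have := ih h'
      rw [← this]
      simp only [greedy, List.get_eq_getElem]
      rw [List.getElem_append_left]
    · subst h'
      simp only [greedy, List.get_eq_getElem]
      rw [List.getElem_append_right (by rw [greedy_length])]
      simp [greedy_length]

noncomputable def gf (d : List Str → ℝ) (n : ℕ) : Str := nextStr d (greedy d n)

lemma gf_mem_freeSet (d : List Str → ℝ) (n : ℕ) : gf d n ∈ freeSet (greedy d n) :=
  nextStr_mem (freeSet_nonempty (greedy_isPPP d n))

lemma gf_length (d : List Str → ℝ) (n : ℕ) : (gf d n).length = (stdEnum n).length := by
  have := (mem_freeSet.1 (gf_mem_freeSet d n)).1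
  rwa [greedy_length] at this

lemma gf_mem_greedy (d : List Str → ℝ) {i n : ℕ} (h : i < n) : gf d i ∈ greedy d n := by
  show nextStr d (greedy d i) ∈ greedy d n
  rw [← greedy_get d n i h]
  exact List.get_mem _ _

lemma gf_not_mem_greedy (d : List Str → ℝ) (n : ℕ) : gf d n ∉ greedy d n :=
  (mem_freeSet.1 (gf_mem_freeSet d n)).2

lemma greedy_succ (d : List Str → ℝ) (n : ℕ) :
    greedy d (n+1) = greedy d n ++ [gf d n] := rfl

lemma greedy_zero (d : List Str → ℝ) : greedy d 0 = [] := rfl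

lemma gf_min (d : List Str → ℝ) (n : ℕ) {x : Str} (hx : x ∈ freeSet (greedy d n)) :
    d (greedy d n ++ [gf d n]) ≤ d (greedy d n ++ [x]) :=
  nextStr_min (freeSet_nonempty (greedy_isPPP d n)) hx

attribute [irreducible] nextStr greedy gf

lemma gf_injective (d : List Str → ℝ) : Function.Injective (gf d) := by
  intro a b h
  by_contra hne
  rcases Nat.lt_or_ge a b with h' | h'
  · have hm := gf_mem_greedy d h'
    rw [h] at hm
    exact gf_not_mem_greedy d b hm
  · have h'' : b < a := by omega
    have hm := gf_mem_greedy d h''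
    rw [← h] at hm
    exact gf_not_mem_greedy d a hm

lemma log2_eq_of_Ico {n i : ℕ} (h1 : 2^n - 1 ≤ i) (h2 : i < 2^(n+1) - 1) :
    Nat.log2 (i+1) = n := by
  have hp : 0 < 2^n := Nat.pow_pos (by norm_num)
  have hl : n ≤ Nat.log2 (i+1) := (Nat.le_log2 (Nat.succ_ne_zero i)).2 (by omega)
  have hr : Nat.log2 (i+1) < n + 1 := (Nat.log2_lt (Nat.succ_ne_zero i)).2 (by omega)
  omega

lemma gf_surjective (d : List Str → ℝ) : Function.Surjective (gf d) := by
  intro s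
  set n := s.length with hn
  set T : Finset ℕ := Finset.Ico (2^n - 1) (2^(n+1) - 1) with hT
  have hmaps : ∀ i ∈ T, gf d i ∈ strsOfLen n := by
    intro i hi
    rw [Finset.mem_Ico] at hi
    rw [mem_strsOfLen, gf_length, stdEnum_length, log2_eq_of_Ico hi.1 hi.2]
  have himg : T.image (gf d) = strsOfLen n := by
    apply Finset.eq_of_subset_of_card_le
    · intro x hx
      obtain ⟨i, hi, rfl⟩ := Finset.mem_image.1 hx
      exact hmaps i hi
    · rw [card_strsOfLen, Finset.card_image_of_injective _ (gf_injective d), Nat.card_Ico]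
      have hp : 0 < 2^n := Nat.pow_pos (by norm_num)
      have h2 : 2^(n+1) = 2 * 2^n := by ring
      omega
  have hmem : s ∈ T.image (gf d) := by
    rw [himg, mem_strsOfLen]
  obtain ⟨i, _, hi⟩ := Finset.mem_image.1 hmem
  exact ⟨i, hi⟩

noncomputable def stdEquiv : ℕ ≃ Str :=
  Equiv.ofBijective stdEnum ⟨stdEnum_injective, stdEnum_surjective⟩

noncomputable def greedyPerm (d : List Str → ℝ) : LPPerm where
  toFun := fun x => gf d ((stdEquiv).symm x)
  bij := by
    have : Function.Bijective (gf d ∘ (stdEquiv).symm) :=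
      Function.Bijective.comp ⟨gf_injective d, gf_surjective d⟩ (stdEquiv).symm.bijective
    exact this
  lenPres := by
    intro x
    rw [gf_length]
    congr 1
    have h2 : stdEnum ((stdEquiv).symm x) = stdEquiv ((stdEquiv).symm x) := rfl
    rw [h2, (stdEquiv).apply_symm_apply x]

lemma greedyPerm_apply (d : List Str → ℝ) (n : ℕ) :
    (greedyPerm d).toFun (stdEnum n) = gf d n := by
  show gf d ((stdEquiv).symm (stdEnum n)) = gf d n
  congr 1
  exact (stdEquiv).symm_apply_apply n

lemma restrict_length (π : LPPerm) (N : ℕ) : (π.restrict N).length = N := by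
  simp [LPPerm.restrict]

lemma restrict_succ (π : LPPerm) (N : ℕ) :
    π.restrict (N+1) = π.restrict N ++ [π.toFun (stdEnum N)] := by
  simp [LPPerm.restrict, List.range_succ]

lemma restrict_get (π : LPPerm) (N i : ℕ) (h : i < N) :
    (π.restrict N).get ⟨i, by rw [restrict_length]; exact h⟩ = π.toFun (stdEnum i) := by
  simp [LPPerm.restrict]

lemma restrict_isPPP (π : LPPerm) (N : ℕ) : IsPPP (π.restrict N) := by
  constructor
  · rw [LPPerm.restrict]
    apply List.Nodup.map
    · exact fun a b hab => stdEnum_injective (π.bij.1 hab)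
    · exact List.nodup_range
  · intro i h
    rw [restrict_length] at h
    rw [restrict_get π N i h, π.lenPres]

lemma greedyPerm_restrict (d : List Str → ℝ) (N : ℕ) :
    (greedyPerm d).restrict N = greedy d N := by
  induction N with
  | zero => simp [LPPerm.restrict, greedy_zero]
  | succ N ih =>
    rw [restrict_succ, ih, greedy_succ, greedyPerm_apply]

lemma next_mem_freeSet (π : LPPerm) (N : ℕ) :
    π.toFun (stdEnum N) ∈ freeSet (π.restrict N) := by
  rw [mem_freeSet, restrict_length, π.lenPres]
  refine ⟨rfl, ?_⟩
  intro hmem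
  rw [LPPerm.restrict, List.mem_map] at hmem
  obtain ⟨i, hi, heq⟩ := hmem
  rw [List.mem_range] at hi
  have := stdEnum_injective (π.bij.1 heq)
  omega

lemma exists_le_avg {d : List Str → ℝ} (hd : IsPermMartingale d) {g : List Str}
    (hg : IsPPP g) (hne : (freeSet g).Nonempty) :
    ∃ x ∈ freeSet g, d (g ++ [x]) ≤ d g := by
  by_contra h
  push_neg at h
  have hsum : ∑ _x ∈ freeSet g, d g < ∑ x ∈ freeSet g, d (g ++ [x]) :=
    Finset.sum_lt_sum_of_nonempty hne h
  rw [Finset.sum_const, nsmul_eq_mul] at hsum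
  have hcard : (0 : ℝ) < (freeSet g).card := by
    exact_mod_cast Finset.card_pos.2 hne
  have heq := hd.2 g hg
  rw [heq, one_div] at hsum
  rw [← mul_assoc, mul_inv_cancel₀ (ne_of_gt hcard), one_mul] at hsum
  exact lt_irrefl _ hsum

noncomputable def eps (i : ℕ) : ℝ := (2 : ℝ) ^ (-(2 * ((stdEnum i).length : ℤ)))

lemma eps_nonneg (i : ℕ) : 0 ≤ eps i :=
  le_of_lt (zpow_pos (by norm_num) _)

lemma eps_eq (i : ℕ) : eps i = ((1:ℝ)/4) ^ Nat.log2 (i+1) := by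
  rw [eps, stdEnum_length]
  set k := Nat.log2 (i+1)
  rw [show (-(2 * (k:ℤ))) = -((2*k : ℕ) : ℤ) by push_cast; ring, zpow_neg, zpow_natCast,
    pow_mul, one_div, inv_pow]
  norm_num

lemma sum_eps_levels (K : ℕ) :
    ∑ i ∈ Finset.range (2^K - 1), eps i = 2 - 2 * ((1:ℝ)/2)^K := by
  induction K with
  | zero => simp
  | succ K ih =>
    have h1 : 2^K - 1 ≤ 2^(K+1) - 1 := by
      have : 2^K ≤ 2^(K+1) := Nat.pow_le_pow_right (by norm_num) (by omega)
      omega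
    rw [Finset.range_eq_Ico, ← Finset.sum_Ico_consecutive _ (Nat.zero_le _) h1,
      ← Finset.range_eq_Ico, ih]
    have h2 : ∑ i ∈ Finset.Ico (2^K - 1) (2^(K+1) - 1), eps i
        = (2^K : ℝ) * ((1:ℝ)/4)^K := by
      rw [Finset.sum_congr rfl (fun i hi => ?_), Finset.sum_const, Nat.card_Ico,
        nsmul_eq_mul]
      · congr 1
        have e1 : (1:ℕ) ≤ 2^K := Nat.one_le_two_pow
        have e2 : 2^(K+1) = 2*2^K := by ring
        have hn : 2^(K+1) - 1 - (2^K - 1) = 2^K := by omega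
        rw [hn]
        push_cast
        ring
      · rw [Finset.mem_Ico] at hi
        rw [eps_eq, log2_eq_of_Ico hi.1 hi.2]
    rw [h2]
    have h3 : (2:ℝ)^K * ((1:ℝ)/4)^K = ((1:ℝ)/2)^K := by
      rw [← mul_pow]; norm_num
    rw [h3, pow_succ]
    ring

lemma sum_eps_le (N : ℕ) : ∑ i ∈ Finset.range N, eps i ≤ 2 := by
  have h1 : ∑ i ∈ Finset.range N, eps i ≤ ∑ i ∈ Finset.range (2^N - 1), eps i := by
    apply Finset.sum_le_sum_of_subset_of_nonneg
    · apply Finset.range_subset_range.2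
      have := Nat.lt_two_pow_self (n := N)
      omega
    · exact fun i _ _ => eps_nonneg i
  rw [sum_eps_levels] at h1
  have h2 : (0:ℝ) ≤ 2 * ((1:ℝ)/2)^N := by positivity
  linarith

lemma main_ex (d : List Str → ℝ) :
    ∃ π : LPPerm, ∀ i : ℕ, ∀ x ∈ freeSet (π.restrict i),
      d (π.restrict (i + 1)) ≤ d (π.restrict i ++ [x]) + eps i := by
  refine ⟨greedyPerm d, fun i x hx => ?_⟩
  rw [greedyPerm_restrict] at hx
  rw [greedyPerm_restrict, greedyPerm_restrict, greedy_succ]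
  have hmin := gf_min d i hx
  have hnn := eps_nonneg i
  linarith

lemma main_bound {d : List Str → ℝ} (hd : IsPermMartingale d) (π : LPPerm)
    (hyp : ∀ i : ℕ, ∀ x ∈ freeSet (π.restrict i),
      d (π.restrict (i + 1)) ≤ d (π.restrict i ++ [x]) + eps i) :
    (∀ N : ℕ, d (π.restrict N) ≤ d [] + ∑ i ∈ Finset.range N, eps i ∧
      d [] + ∑ i ∈ Finset.range N, eps i ≤ d [] + 2) ∧
    ¬ succeedsOn d π := by
  have hB : ∀ N, d (π.restrict N) ≤ d [] + ∑ i ∈ Finset.range N, eps i := by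
    intro N
    induction N with
    | zero => simp [LPPerm.restrict]
    | succ N ih =>
      obtain ⟨x₀, hx₀, hle⟩ := exists_le_avg hd (restrict_isPPP π N)
        ⟨_, next_mem_freeSet π N⟩
      have h1 := hyp N x₀ hx₀
      rw [Finset.sum_range_succ]
      linarith
  have hmain : ∀ N, d (π.restrict N) ≤ d [] + ∑ i ∈ Finset.range N, eps i ∧
      d [] + ∑ i ∈ Finset.range N, eps i ≤ d [] + 2 := by
    intro N
    exact ⟨hB N, by have := sum_eps_le N; linarith⟩
  refine ⟨hmain, ?_⟩
  intro hs
  obtain ⟨N, hN⟩ := (hs (d [] + 2)).exists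
  have h1 := (hmain N).1
  have h2 := (hmain N).2
  linarith
-- AUX END

/-- for any permutation martingale `d` there is a permutation `π` that always
extends by a (near-)minimizing value, i.e., `d(π↾(i+1)) ≤ min_{x ∈ free(π↾i)} d((π↾i),x) + 2^{−2|s_i|}`;
for any such `π`, `d(π↾N) ≤ d([]) + Σ_{i<N} 2^{−2|s_i|} ≤ d([]) + 2` for all `N`, so `d` does not
succeed on `π`; consequently no permutation martingale succeeds on every permutation. -/
theorem stmt11 (d : List Str → ℝ) (hd : IsPermMartingale d) :
    (∃ π : LPPerm, ∀ i : ℕ, ∀ x ∈ freeSet (π.restrict i),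
        d (π.restrict (i + 1)) ≤ d (π.restrict i ++ [x]) +
          (2 : ℝ) ^ (-(2 * ((stdEnum i).length : ℤ)))) ∧
    (∀ π : LPPerm,
        (∀ i : ℕ, ∀ x ∈ freeSet (π.restrict i),
            d (π.restrict (i + 1)) ≤ d (π.restrict i ++ [x]) +
              (2 : ℝ) ^ (-(2 * ((stdEnum i).length : ℤ)))) →
        (∀ N : ℕ,
            d (π.restrict N) ≤
              d [] + ∑ i ∈ Finset.range N, (2 : ℝ) ^ (-(2 * ((stdEnum i).length : ℤ))) ∧
            d [] + ∑ i ∈ Finset.range N, (2 : ℝ) ^ (-(2 * ((stdEnum i).length : ℤ))) ≤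
              d [] + 2) ∧
        ¬ succeedsOn d π) ∧
    (∀ d' : List Str → ℝ, IsPermMartingale d' → ∃ π : LPPerm, ¬ succeedsOn d' π) := by
  refine ⟨main_ex d, fun π hyp => ⟨(main_bound hd π hyp).1, (main_bound hd π hyp).2⟩, ?_⟩
  intro d' hd'
  obtain ⟨π, hπ⟩ := main_ex d'
  exact ⟨π, (main_bound hd' π hπ).2⟩
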